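/- Let d ≥ 2 be an integer, β > (d+1)/2 real, A > 0 and T < 4A² + 2β. Then (c'_{d,β}/(2β)^{d/2}) · (π^{(d−1)/2}/Γ((d+1)/2)) · A^{d−1} · ∫_{−∞}^{T−4A²} (1 − s/(2β))^{−β} ds > (A^{d−1} / ((2(d+1))^{d/2} √π Γ((d+1)/2))) · e^{T/2 − 2A²}. -/

import Mathlib

/-!
Since `log (1 - t/β) ≤ -t/β`, the integrand dominates `exp (s/2)`, so the integral is at least
`2 exp ((T - 4A²)/2)`. After cancelling the powers of `π`, what remains is
`(2β)^{d/2} Γ(β - d/2) ≤ (2(d+1))^{d/2} Γ(β)`. This follows from `x^s Γ(x) ≤ Γ(x + s)` for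
`s ≥ 1` (log-convexity of `Γ` together with `Γ(x+1) = x Γ(x)`), applied with `x = β - d/2` and
`s = d/2`, and from `2β ≤ 2(d+1)(β - d/2)`, which is exactly `β ≥ (d+1)/2`; the factor `2`
from the integral makes the inequality strict.
-/

open MeasureTheory

noncomputable def cPrime (d : ℕ) (β : ℝ) : ℝ :=
  Real.Gamma β / (Real.pi ^ ((d : ℝ) / 2) * Real.Gamma (β - (d : ℝ) / 2))

open Real Set

theorem Real.rpow_mul_Gamma_le_Gamma_add {x s : ℝ} (hx : 0 < x) (hs : 1 ≤ s) :
    x ^ s * Gamma x ≤ Gamma (x + s) := by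
  have hΓx := Gamma_pos_of_pos hx
  have hΓxs := Gamma_pos_of_pos (by linarith : 0 < x + s)
  -- slopes of the convex function `log ∘ Γ` from `x` increase, and the one to `x + 1` is `log x`
  have hslope := convexOn_log_Gamma.secant_mono (a := x) (x := x + 1) (y := x + s) hx
    (by simp only [mem_Ioi]; linarith) (by simp only [mem_Ioi]; linarith)
    (by linarith) (by linarith) (by linarith)
  simp only [Function.comp_apply, Gamma_add_one hx.ne', log_mul hx.ne' hΓx.ne',
    add_sub_cancel_left, div_one, add_sub_cancel_right] at hslope
  rw [le_div_iff₀ (by linarith)] at hslope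
  rw [← log_le_log_iff (by positivity) hΓxs, log_mul (by positivity) hΓx.ne', log_rpow hx]
  linarith

theorem Real.exp_le_one_sub_div_rpow_neg {t β : ℝ} (hβ : 0 < β) (ht : t < β) :
    exp t ≤ (1 - t / β) ^ (-β) := by
  have hb : 0 < 1 - t / β := by rw [sub_pos, div_lt_one hβ]; exact ht
  rw [rpow_def_of_pos hb, exp_le_exp]
  have hlog : log (1 - t / β) * β ≤ -t := by
    have := mul_le_mul_of_nonneg_right (log_le_sub_one_of_pos hb) hβ.le
    rwa [sub_sub_cancel_left, neg_mul, div_mul_cancel₀ _ hβ.ne'] at this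
  linarith

theorem integrableOn_one_sub_div_rpow_Iic {a c u : ℝ} (ha : a < -1) (hc : 0 < c) (hu : u < c) :
    IntegrableOn (fun s ↦ (1 - s / c) ^ a) (Iic u) := by
  have hIoi : IntegrableOn (fun x ↦ (x + c) ^ a * (c ^ a)⁻¹) (Ioi (-u)) :=
    (integrableOn_add_rpow_Ioi_of_lt ha (by linarith)).mul_const _
  replace hIoi := hIoi.comp_neg_Iio
  refine (integrableOn_Iic_iff_integrableOn_Iio).mpr
    (hIoi.congr_fun (fun s hs ↦ ?_) measurableSet_Iio)
  have hs : 0 ≤ -s + c := by linarith [hs.out]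
  dsimp only
  rw [← div_eq_mul_inv, ← div_rpow hs hc.le]
  congr 1
  field_simp
  ring

theorem exp_mul_div_le_integral_one_sub_div_rpow_neg {β c u : ℝ} (hβ : 1 < β) (hc : 0 < c)
    (hu : u < c) :
    exp (β / c * u) / (β / c) ≤ ∫ s in Iic u, (1 - s / c) ^ (-β) := by
  have hβc : 0 < β / c := by positivity
  rw [← integral_exp_mul_Iic hβc]
  refine setIntegral_mono_on (integrableOn_exp_mul_Iic hβc u)
    (integrableOn_one_sub_div_rpow_Iic (by linarith) hc hu) measurableSet_Iic fun s hs ↦ ?_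
  have hs : β / c * s < β := by
    calc β / c * s ≤ β / c * u := by gcongr; exact hs
      _ < β / c * c := by gcongr
      _ = β := div_mul_cancel₀ _ hc.ne'
  have h := exp_le_one_sub_div_rpow_neg (by linarith) hs
  rwa [show β / c * s / β = s / c by field_simp] at h

theorem two_mul_rpow_mul_Gamma_sub_le {d β : ℝ} (hd : 2 ≤ d) (hβ : (d + 1) / 2 ≤ β) :
    (2 * β) ^ (d / 2) * Gamma (β - d / 2) ≤ (2 * (d + 1)) ^ (d / 2) * Gamma β := by
  have hx : 0 < β - d / 2 := by linarith
  have hbase : 2 * β ≤ 2 * (d + 1) * (β - d / 2) := by nlinarith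
  calc (2 * β) ^ (d / 2) * Gamma (β - d / 2)
      ≤ (2 * (d + 1) * (β - d / 2)) ^ (d / 2) * Gamma (β - d / 2) := by
        have := Gamma_pos_of_pos hx
        gcongr
        linarith
    _ = (2 * (d + 1)) ^ (d / 2) * ((β - d / 2) ^ (d / 2) * Gamma (β - d / 2)) := by
        rw [mul_rpow (by linarith) hx.le, mul_assoc]
    _ ≤ (2 * (d + 1)) ^ (d / 2) * Gamma β := by
        gcongr
        simpa using rpow_mul_Gamma_le_Gamma_add hx (by linarith : 1 ≤ d / 2)

theorem cPrime_div_mul_pi_rpow_div (d : ℕ) (β P G : ℝ) :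
    cPrime d β / P * (π ^ (((d : ℝ) - 1) / 2) / G) =
      Gamma β / (P * Gamma (β - d / 2) * (√π * G)) := by
  rw [show ((d : ℝ) - 1) / 2 = d / 2 - 1 / 2 by ring, rpow_sub pi_pos, ← sqrt_eq_rpow, cPrime]
  field_simp

theorem one_div_lt_two_mul_cPrime_div {d : ℕ} (hd : 2 ≤ d) {β : ℝ}
    (hβ : ((d : ℝ) + 1) / 2 < β) :
    1 / ((2 * ((d : ℝ) + 1)) ^ ((d : ℝ) / 2) * √π * Gamma (((d : ℝ) + 1) / 2)) <
      2 * (cPrime d β / (2 * β) ^ ((d : ℝ) / 2) *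
        (π ^ (((d : ℝ) - 1) / 2) / Gamma (((d : ℝ) + 1) / 2))) := by
  have hd' : (2 : ℝ) ≤ d := by exact_mod_cast hd
  have hβ0 : 0 < β := by linarith
  have hΓx : 0 < Gamma (β - d / 2) := Gamma_pos_of_pos (by linarith)
  set S := √π * Gamma (((d : ℝ) + 1) / 2)
  have hS : 0 < S := by positivity
  rw [cPrime_div_mul_pi_rpow_div, ← mul_div_assoc,
    div_lt_div_iff₀ (by positivity) (by positivity)]
  calc 1 * ((2 * β) ^ ((d : ℝ) / 2) * Gamma (β - d / 2) * S)
      = (2 * β) ^ ((d : ℝ) / 2) * Gamma (β - d / 2) * S := one_mul _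
    _ ≤ (2 * ((d : ℝ) + 1)) ^ ((d : ℝ) / 2) * Gamma β * S :=
        mul_le_mul_of_nonneg_right (two_mul_rpow_mul_Gamma_sub_le hd' hβ.le) hS.le
    _ < 2 * ((2 * ((d : ℝ) + 1)) ^ ((d : ℝ) / 2) * Gamma β * S) :=
        lt_two_mul_self (by positivity)
    _ = _ := by ring

/-- For `d ≥ 2`, `β > (d+1)/2`, `A > 0` and `T < 4A² + 2β`,
`(c'_{d,β}/(2β)^{d/2}) (π^{(d-1)/2}/Γ((d+1)/2)) A^{d-1} ∫_{-∞}^{T-4A²}(1-s/(2β))^{-β} ds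
 > (A^{d-1}/((2(d+1))^{d/2} √π Γ((d+1)/2))) e^{T/2-2A²}`. -/
theorem stmt_7 (d : ℕ) (hd : 2 ≤ d) (β A T : ℝ)
    (hβ : ((d : ℝ) + 1) / 2 < β) (hA : 0 < A) (hT : T < 4 * A ^ 2 + 2 * β) :
    A ^ (d - 1) /
        ((2 * ((d : ℝ) + 1)) ^ ((d : ℝ) / 2) * Real.sqrt Real.pi *
          Real.Gamma (((d : ℝ) + 1) / 2)) * Real.exp (T / 2 - 2 * A ^ 2)
      < cPrime d β / (2 * β) ^ ((d : ℝ) / 2) *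
          (Real.pi ^ (((d : ℝ) - 1) / 2) / Real.Gamma (((d : ℝ) + 1) / 2)) *
          A ^ (d - 1) *
          ∫ s in Set.Iic (T - 4 * A ^ 2), (1 - s / (2 * β)) ^ (-β) := by
  have hd' : (2 : ℝ) ≤ d := by exact_mod_cast hd
  have hβ0 : 0 < β := by linarith
  have hconst := one_div_lt_two_mul_cPrime_div hd hβ
  set C := (2 * ((d : ℝ) + 1)) ^ ((d : ℝ) / 2) * √π * Gamma (((d : ℝ) + 1) / 2)
  set K := cPrime d β / (2 * β) ^ ((d : ℝ) / 2) *
    (π ^ (((d : ℝ) - 1) / 2) / Gamma (((d : ℝ) + 1) / 2))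
  have hK : 0 < K := by linarith [show 0 < 1 / C by positivity]
  have hI : 2 * exp (T / 2 - 2 * A ^ 2) ≤
      ∫ s in Iic (T - 4 * A ^ 2), (1 - s / (2 * β)) ^ (-β) := by
    have h := exp_mul_div_le_integral_one_sub_div_rpow_neg (β := β) (c := 2 * β)
      (u := T - 4 * A ^ 2) (by linarith) (by linarith) (by linarith)
    rwa [show β / (2 * β) = 1 / 2 by field_simp,
      show 1 / 2 * (T - 4 * A ^ 2) = T / 2 - 2 * A ^ 2 by ring,
      div_div_eq_mul_div, div_one, mul_comm] at h
  calc A ^ (d - 1) / C * exp (T / 2 - 2 * A ^ 2)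
      = 1 / C * (A ^ (d - 1) * exp (T / 2 - 2 * A ^ 2)) := by ring
    _ < 2 * K * (A ^ (d - 1) * exp (T / 2 - 2 * A ^ 2)) :=
        mul_lt_mul_of_pos_right hconst (by positivity)
    _ = K * A ^ (d - 1) * (2 * exp (T / 2 - 2 * A ^ 2)) := by ring
    _ ≤ _ := mul_le_mul_of_nonneg_left hI (by positivity)
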